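/- Let X = (x₀,…,x_{d+1}) ∈ H^{d+2} with min(X) > 0, and define c_MT(X)² = (1/(d+2)) · diam(X)^{−d(d+1)} · Σ_{i=0}^{d+1} p_d sin_{x_i}(X)², c_alg(X) = p_d sin_{x₀}(X) / ∏_{1≤i<j≤d+1} ‖x_i − x_j‖, c_vol(X)² = M_{d+1}(X)² / diam(X)^{(d+1)(d+2)}, and c_min(X)² = min_i p_d sin_{x_i}(X)² / diam(X)^{d(d+1)}. Then: (a) c_alg(X)² ≥ c_MT(X)²; (b) if min(X) ≥ λ·diam(X) for some λ > 0, then c_MT(X)² ≥ λ^{d(d+1)} · c_alg(X)²; (c) c_min(X)² ≥ c_vol(X)²; (d) if min(X) ≥ λ·diam(X), then c_vol(X)² ≥ λ^{2(d+1)} · c_MT(X)². -/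

import Mathlib

open Metric Finset

noncomputable section

/-- n! times the n-volume of the simplex on y₀,…,y_n (Gram determinant form). -/
def simplexContent {H : Type*} [NormedAddCommGroup H] [InnerProductSpace ℝ H]
    (n : ℕ) (y : Fin (n + 1) → H) : ℝ :=
  Real.sqrt (Matrix.det (Matrix.of fun i j : Fin n =>
    (inner ℝ (y i.succ - y 0) (y j.succ - y 0) : ℝ)))

/-- The polar sine of X at the vertex X i. -/
def polarSin {H : Type*} [NormedAddCommGroup H] [InnerProductSpace ℝ H]
    {n : ℕ} (X : Fin (n + 2) → H) (i : Fin (n + 2)) : ℝ :=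
  simplexContent (n + 1) X / ∏ j ∈ Finset.univ.erase i, dist (X j) (X i)

/-- The smallest pairwise distance among the coordinates of X. -/
def tmin {H : Type*} [PseudoMetricSpace H] {n : ℕ} (X : Fin n → H) : ℝ :=
  sInf {r | ∃ i j, i ≠ j ∧ r = dist (X i) (X j)}

/-- The largest pairwise distance among the coordinates of X. -/
def tdiam {H : Type*} [PseudoMetricSpace H] {n : ℕ} (X : Fin n → H) : ℝ :=
  Metric.diam (Set.range X)

/-- c_MT(X)² = (1/(d+2))·diam(X)^{−d(d+1)}·Σᵢ p_d sin_{xᵢ}(X)². -/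
def cMTsq {H : Type*} [NormedAddCommGroup H] [InnerProductSpace ℝ H]
    (d : ℕ) (X : Fin (d + 2) → H) : ℝ :=
  (1 / (d + 2)) * (∑ i, polarSin X i ^ 2) / tdiam X ^ (d * (d + 1))

/-- c_alg(X) = p_d sin_{x₀}(X) / ∏_{1≤i<j≤d+1} ‖xᵢ − xⱼ‖. -/
def cAlg {H : Type*} [NormedAddCommGroup H] [InnerProductSpace ℝ H]
    (d : ℕ) (X : Fin (d + 2) → H) : ℝ :=
  polarSin X 0 /
    ∏ p ∈ Finset.univ.filter (fun p : Fin (d + 2) × Fin (d + 2) => 0 < p.1 ∧ p.1 < p.2),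
      dist (X p.1) (X p.2)

/-- c_vol(X)² = M_{d+1}(X)² / diam(X)^{(d+1)(d+2)}. -/
def cVolsq {H : Type*} [NormedAddCommGroup H] [InnerProductSpace ℝ H]
    (d : ℕ) (X : Fin (d + 2) → H) : ℝ :=
  simplexContent (d + 1) X ^ 2 / tdiam X ^ ((d + 1) * (d + 2))

/-- c_min(X)² = minᵢ p_d sin_{xᵢ}(X)² / diam(X)^{d(d+1)}. -/
def cMinsq {H : Type*} [NormedAddCommGroup H] [InnerProductSpace ℝ H]
    (d : ℕ) (X : Fin (d + 2) → H) : ℝ :=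
  (Finset.univ.inf' Finset.univ_nonempty fun i => polarSin X i ^ 2) / tdiam X ^ (d * (d + 1))

/-!
Let `M` be the content of the simplex, `Π` the product of all its edge lengths and `Q i` the
product of the `d + 1` edges at `x i`. Then `c_alg = M / Π` and `p_d sin_{x i} = M / Q i`, so
`p_d sin_{x i}² = c_alg² · T i`, where `T i` is the product of the squares of the `d(d+1)/2`
edges not meeting `x i`. Every edge lies between `λ · diam X` and `diam X`; bounding `T i` and `Q i`
accordingly and averaging over the vertices gives the four inequalities.
-/

namespace Finset

variable {ι M : Type*} [CommMonoid M]

theorem prod_offDiag_eq_sq_prod_filter_lt [LinearOrder ι] (s : Finset ι) (f : ι → ι → M)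
    (hf : ∀ a b, f a b = f b a) :
    ∏ p ∈ s.offDiag, f p.1 p.2
      = (∏ p ∈ s.offDiag.filter (fun p => p.1 < p.2), f p.1 p.2) ^ 2 := by
  have hswap : ∏ p ∈ s.offDiag.filter (fun p => ¬p.1 < p.2), f p.1 p.2
      = ∏ p ∈ s.offDiag.filter (fun p => p.1 < p.2), f p.1 p.2 := by
    refine prod_nbij' Prod.swap Prod.swap ?_ ?_ (by simp) (by simp) (fun p _ => hf _ _) <;>
      · intro p
        simp only [mem_filter, mem_offDiag, Prod.fst_swap, Prod.snd_swap]
        grind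
  rw [← prod_filter_mul_prod_filter_not s.offDiag (fun p => p.1 < p.2), hswap, sq]

theorem prod_offDiag_eq_sq_prod_erase_mul [DecidableEq ι] {s : Finset ι} {i : ι} (hi : i ∈ s)
    (f : ι → ι → M) (hf : ∀ a b, f a b = f b a) :
    ∏ p ∈ s.offDiag, f p.1 p.2
      = (∏ j ∈ s.erase i, f j i) ^ 2 * ∏ p ∈ (s.erase i).offDiag, f p.1 p.2 := by
  rw [← insert_erase hi, offDiag_insert (notMem_erase i s), erase_insert (notMem_erase i s),
    prod_union, prod_union, singleton_product, product_singleton, prod_map, prod_map]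
  · simp only [Function.Embedding.coeFn_mk, hf i]
    rw [sq]
    ac_rfl
  all_goals
    simp only [disjoint_left, mem_union, mem_offDiag, mem_product, mem_singleton, mem_erase]
    grind

end Finset

section Distances

variable {H : Type*} [PseudoMetricSpace H] {n : ℕ}

def pairwiseDistProd {ι : Type*} (X : ι → H) (s : Finset ι) : ℝ :=
  ∏ p ∈ s.offDiag, dist (X p.1) (X p.2)

theorem pairwiseDistProd_eq_sq_prod_erase_mul {ι : Type*} [DecidableEq ι] (X : ι → H)
    {s : Finset ι} {i : ι} (hi : i ∈ s) :
    pairwiseDistProd X s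
      = (∏ j ∈ s.erase i, dist (X j) (X i)) ^ 2 * pairwiseDistProd X (s.erase i) :=
  prod_offDiag_eq_sq_prod_erase_mul hi (fun a b => dist (X a) (X b)) fun _ _ => dist_comm _ _

theorem tmin_le_dist (X : Fin n → H) {i j : Fin n} (hij : i ≠ j) :
    tmin X ≤ dist (X i) (X j) :=
  csInf_le ⟨0, by rintro r ⟨i, j, -, rfl⟩; exact dist_nonneg⟩ ⟨i, j, hij, rfl⟩

theorem dist_le_tdiam (X : Fin n → H) (i j : Fin n) : dist (X i) (X j) ≤ tdiam X :=
  dist_le_diam_of_mem (Set.finite_range X).isBounded (Set.mem_range_self i) (Set.mem_range_self j)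

theorem tdiam_nonneg (X : Fin n → H) : 0 ≤ tdiam X :=
  diam_nonneg

theorem injective_of_tmin_pos {X : Fin n → H} (hmin : 0 < tmin X) :
    Function.Injective X := by
  intro i j hXij
  by_contra hij
  have := hmin.trans_le (tmin_le_dist X hij)
  rw [hXij, dist_self] at this
  exact this.false

variable {κ : Type*} (X : Fin n → H) (S : Finset κ) (a b : κ → Fin n)

theorem prod_dist_le_tdiam_pow : ∏ k ∈ S, dist (X (a k)) (X (b k)) ≤ tdiam X ^ #S := by
  rw [← prod_const]
  exact prod_le_prod (fun k _ => dist_nonneg) (fun k _ => dist_le_tdiam X (a k) (b k))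

theorem pow_le_prod_dist {r : ℝ} (hr0 : 0 ≤ r) (hr : r ≤ tmin X)
    (hab : ∀ k ∈ S, a k ≠ b k) : r ^ #S ≤ ∏ k ∈ S, dist (X (a k)) (X (b k)) := by
  rw [← prod_const]
  exact prod_le_prod (fun k _ => hr0) (fun k hk => hr.trans (tmin_le_dist X (hab k hk)))

end Distances

theorem tdiam_pos {H : Type*} [MetricSpace H] {n : ℕ} {X : Fin (n + 2) → H}
    (hX : Function.Injective X) : 0 < tdiam X :=
  (dist_pos.mpr (hX.ne (by simp))).trans_le (dist_le_tdiam X 0 1)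

theorem card_offDiag_erase_univ {n : ℕ} (i : Fin (n + 2)) :
    #(univ.erase i).offDiag = n * (n + 1) := by
  rw [offDiag_card, card_erase_of_mem (mem_univ i), card_univ, Fintype.card_fin,
    show n + 2 - 1 = n + 1 by omega]
  exact Nat.sub_eq_of_eq_add (by ring)

section Curvatures

variable {H : Type*} [NormedAddCommGroup H] [InnerProductSpace ℝ H]

theorem cAlg_sq_eq (d : ℕ) (X : Fin (d + 2) → H) :
    cAlg d X ^ 2 = simplexContent (d + 1) X ^ 2 / pairwiseDistProd X univ := by
  have hfilter : univ.filter (fun p : Fin (d + 2) × Fin (d + 2) => 0 < p.1 ∧ p.1 < p.2)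
      = (univ.erase 0).offDiag.filter (fun p => p.1 < p.2) := by
    ext p
    simp only [mem_filter, mem_univ, true_and, mem_offDiag, mem_erase, Fin.pos_iff_ne_zero]
    grind
  rw [cAlg, polarSin, hfilter, div_div, div_pow, mul_pow,
    ← prod_offDiag_eq_sq_prod_filter_lt _ (fun a b => dist (X a) (X b)) fun _ _ => dist_comm _ _,
    ← pairwiseDistProd, pairwiseDistProd_eq_sq_prod_erase_mul X (mem_univ 0)]

theorem polarSin_sq_eq {n : ℕ} {X : Fin (n + 2) → H} (hX : Function.Injective X)
    (i : Fin (n + 2)) :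
    polarSin X i ^ 2 = cAlg n X ^ 2 * pairwiseDistProd X (univ.erase i) := by
  have hT : pairwiseDistProd X (univ.erase i) ≠ 0 :=
    prod_ne_zero_iff.mpr fun p hp => dist_ne_zero.mpr (hX.ne (mem_offDiag.mp hp).2.2)
  rw [cAlg_sq_eq, pairwiseDistProd_eq_sq_prod_erase_mul X (mem_univ i), polarSin, div_pow,
    mul_comm _ (pairwiseDistProd X _), ← div_div, mul_div_cancel₀ _ hT]

variable {d : ℕ} (X : Fin (d + 2) → H) {c : ℝ}

theorem cMTsq_le_of_forall_le (h : ∀ i, polarSin X i ^ 2 ≤ c) :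
    cMTsq d X ≤ c / tdiam X ^ (d * (d + 1)) := by
  have hsum : ∑ i, polarSin X i ^ 2 ≤ (d + 2) * c := by
    simpa using sum_le_card_nsmul univ _ c fun i _ => h i
  rw [cMTsq]
  gcongr
  · exact pow_nonneg (tdiam_nonneg X) _
  · rw [one_div_mul_eq_div, div_le_iff₀ (by positivity)]
    linarith

theorem le_cMTsq_of_forall_le (h : ∀ i, c ≤ polarSin X i ^ 2) :
    c / tdiam X ^ (d * (d + 1)) ≤ cMTsq d X := by
  have hsum : (d + 2) * c ≤ ∑ i, polarSin X i ^ 2 := by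
    simpa using card_nsmul_le_sum univ _ c fun i _ => h i
  rw [cMTsq]
  gcongr
  · exact pow_nonneg (tdiam_nonneg X) _
  · rw [one_div_mul_eq_div, le_div_iff₀ (by positivity)]
    linarith

variable {X}

theorem cMTsq_le_cAlg_sq (hX : Function.Injective X) : cMTsq d X ≤ cAlg d X ^ 2 := by
  have hD := tdiam_pos hX
  calc cMTsq d X ≤ cAlg d X ^ 2 * tdiam X ^ (d * (d + 1)) / tdiam X ^ (d * (d + 1)) := by
        refine cMTsq_le_of_forall_le X fun i => ?_
        rw [polarSin_sq_eq hX i, ← card_offDiag_erase_univ i]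
        gcongr
        exact prod_dist_le_tdiam_pow X _ Prod.fst Prod.snd
    _ = cAlg d X ^ 2 := by field_simp

theorem pow_mul_cAlg_sq_le_cMTsq (hX : Function.Injective X) {l : ℝ} (hl : 0 ≤ l)
    (hlD : l * tdiam X ≤ tmin X) : l ^ (d * (d + 1)) * cAlg d X ^ 2 ≤ cMTsq d X := by
  have hD := tdiam_pos hX
  calc l ^ (d * (d + 1)) * cAlg d X ^ 2
      = cAlg d X ^ 2 * (l * tdiam X) ^ (d * (d + 1)) / tdiam X ^ (d * (d + 1)) := by
        field_simp
        ring
    _ ≤ cMTsq d X := by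
        refine le_cMTsq_of_forall_le X fun i => ?_
        rw [polarSin_sq_eq hX i, ← card_offDiag_erase_univ i]
        gcongr
        exact pow_le_prod_dist X _ Prod.fst Prod.snd (by positivity) hlD
          fun p hp => (mem_offDiag.mp hp).2.2

theorem cVolsq_le_cMinsq (hX : Function.Injective X) : cVolsq d X ≤ cMinsq d X := by
  rw [cVolsq, cMinsq, show (d + 1) * (d + 2) = (d + 1) * 2 + d * (d + 1) by ring, pow_add,
    ← div_div]
  refine div_le_div_of_nonneg_right (le_inf' _ _ fun i _ => ?_) (pow_nonneg (tdiam_nonneg X) _)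
  have hQ : 0 < ∏ j ∈ univ.erase i, dist (X j) (X i) :=
    prod_pos fun j hj => dist_pos.mpr (hX.ne (ne_of_mem_erase hj))
  rw [polarSin, div_pow, pow_mul]
  gcongr
  simpa [card_erase_of_mem] using prod_dist_le_tdiam_pow X (univ.erase i) (fun j => j) fun _ => i

theorem pow_mul_cMTsq_le_cVolsq (hX : Function.Injective X) {l : ℝ} (hl : 0 < l)
    (hlD : l * tdiam X ≤ tmin X) : l ^ (2 * (d + 1)) * cMTsq d X ≤ cVolsq d X := by
  have hD := tdiam_pos hX
  have hpolarSin : ∀ i, polarSin X i ^ 2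
      ≤ simplexContent (d + 1) X ^ 2 / (l * tdiam X) ^ (2 * (d + 1)) := by
    intro i
    have hlDQ : (l * tdiam X) ^ (d + 1) ≤ ∏ j ∈ univ.erase i, dist (X j) (X i) := by
      simpa [card_erase_of_mem] using
        pow_le_prod_dist X (univ.erase i) (fun j => j) (fun _ => i) (by positivity) hlD
          fun j hj => ne_of_mem_erase hj
    rw [polarSin, div_pow, mul_comm 2, pow_mul]
    gcongr
  calc l ^ (2 * (d + 1)) * cMTsq d X
      ≤ l ^ (2 * (d + 1)) * (simplexContent (d + 1) X ^ 2 / (l * tdiam X) ^ (2 * (d + 1))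
          / tdiam X ^ (d * (d + 1))) := by
        gcongr
        exact cMTsq_le_of_forall_le X hpolarSin
    _ = cVolsq d X := by
        rw [cVolsq, show (d + 1) * (d + 2) = 2 * (d + 1) + d * (d + 1) by ring]
        field_simp
        ring

end Curvatures

theorem curvature_comparisons_general {H : Type*} [NormedAddCommGroup H] [InnerProductSpace ℝ H]
    (d : ℕ) (X : Fin (d + 2) → H) (hmin : 0 < tmin X) :
    (cMTsq d X ≤ cAlg d X ^ 2) ∧
    (∀ l : ℝ, 0 < l → l * tdiam X ≤ tmin X → l ^ (d * (d + 1)) * cAlg d X ^ 2 ≤ cMTsq d X) ∧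
    (cVolsq d X ≤ cMinsq d X) ∧
    (∀ l : ℝ, 0 < l → l * tdiam X ≤ tmin X → l ^ (2 * (d + 1)) * cMTsq d X ≤ cVolsq d X) := by
  have hX := injective_of_tmin_pos hmin
  exact ⟨cMTsq_le_cAlg_sq hX, fun l hl hlD => pow_mul_cAlg_sq_le_cMTsq hX hl.le hlD,
    cVolsq_le_cMinsq hX, fun l hl hlD => pow_mul_cMTsq_le_cVolsq hX hl hlD⟩

/-- Comparison of the menagerie of curvatures: (a) c_alg² ≥ c_MT²; (b) if min(X) ≥ λ·diam(X)
then c_MT² ≥ λ^{d(d+1)}·c_alg²; (c) c_min² ≥ c_vol²; (d) if min(X) ≥ λ·diam(X) then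
c_vol² ≥ λ^{2(d+1)}·c_MT². -/
theorem curvature_comparisons {H : Type*} [NormedAddCommGroup H] [InnerProductSpace ℝ H]
    (d : ℕ) (hd : 1 ≤ d) (X : Fin (d + 2) → H) (hmin : 0 < tmin X) :
    (cMTsq d X ≤ cAlg d X ^ 2) ∧
    (∀ l : ℝ, 0 < l → l * tdiam X ≤ tmin X → l ^ (d * (d + 1)) * cAlg d X ^ 2 ≤ cMTsq d X) ∧
    (cVolsq d X ≤ cMinsq d X) ∧
    (∀ l : ℝ, 0 < l → l * tdiam X ≤ tmin X → l ^ (2 * (d + 1)) * cMTsq d X ≤ cVolsq d X) :=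
  curvature_comparisons_general d X hmin
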